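/- The affine solution space of the RC constraints in the (3,2,2) scenario has dimension 30. Precisely, the subspace of functions P : (ZMod 2)^3 × (ZMod 2)^3 → ℝ satisfying: Σ_{a,b,c} P(a,b,c|x,y,z) = 0 for all x,y,z; Σ_a P(a,b,c|x,y,z) independent of x; Σ_c P(a,b,c|x,y,z) independent of z; Σ_{b,c} P(a,b,c|x,y,z) independent of (y,z); Σ_{a,b} P(a,b,c|x,y,z) independent of (x,y); has dimension 30 as a real vector space. -/
import Mathlib


/-- Index type of a `(3,2,2)` box: outputs `(a,b,c)` and inputs `(x,y,z)`. -/
abbrev RCIndex : Type :=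
  (ZMod 2 × ZMod 2 × ZMod 2) × (ZMod 2 × ZMod 2 × ZMod 2)

/-- Evaluation of a box at an index, as a linear functional. -/
noncomputable def ev (i : RCIndex) : (RCIndex → ℝ) →ₗ[ℝ] ℝ := LinearMap.proj i

noncomputable def sumABC (x y z : ZMod 2) : (RCIndex → ℝ) →ₗ[ℝ] ℝ :=
  ∑ a : ZMod 2, ∑ b : ZMod 2, ∑ c : ZMod 2, ev ((a, b, c), (x, y, z))

noncomputable def sumA (b c x y z : ZMod 2) : (RCIndex → ℝ) →ₗ[ℝ] ℝ :=
  ∑ a : ZMod 2, ev ((a, b, c), (x, y, z))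

noncomputable def sumC (a b x y z : ZMod 2) : (RCIndex → ℝ) →ₗ[ℝ] ℝ :=
  ∑ c : ZMod 2, ev ((a, b, c), (x, y, z))

noncomputable def sumBC (a x y z : ZMod 2) : (RCIndex → ℝ) →ₗ[ℝ] ℝ :=
  ∑ b : ZMod 2, ∑ c : ZMod 2, ev ((a, b, c), (x, y, z))

noncomputable def sumAB (c x y z : ZMod 2) : (RCIndex → ℝ) →ₗ[ℝ] ℝ :=
  ∑ a : ZMod 2, ∑ b : ZMod 2, ev ((a, b, c), (x, y, z))

/-- The linear subspace of `ℝ^64` cut out by the homogeneous normalization and RC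
constraints in the `(3,2,2)` scenario. -/
noncomputable def RCsubspace : Submodule ℝ (RCIndex → ℝ) :=
  (⨅ (x : ZMod 2), ⨅ (y : ZMod 2), ⨅ (z : ZMod 2), LinearMap.ker (sumABC x y z)) ⊓
  (⨅ (b : ZMod 2), ⨅ (c : ZMod 2), ⨅ (x : ZMod 2), ⨅ (x' : ZMod 2), ⨅ (y : ZMod 2),
    ⨅ (z : ZMod 2), LinearMap.ker (sumA b c x y z - sumA b c x' y z)) ⊓
  (⨅ (a : ZMod 2), ⨅ (b : ZMod 2), ⨅ (x : ZMod 2), ⨅ (y : ZMod 2), ⨅ (z : ZMod 2),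
    ⨅ (z' : ZMod 2), LinearMap.ker (sumC a b x y z - sumC a b x y z')) ⊓
  (⨅ (a : ZMod 2), ⨅ (x : ZMod 2), ⨅ (y : ZMod 2), ⨅ (y' : ZMod 2), ⨅ (z : ZMod 2),
    ⨅ (z' : ZMod 2), LinearMap.ker (sumBC a x y z - sumBC a x y' z')) ⊓
  (⨅ (c : ZMod 2), ⨅ (x : ZMod 2), ⨅ (x' : ZMod 2), ⨅ (y : ZMod 2), ⨅ (y' : ZMod 2),
    ⨅ (z : ZMod 2), LinearMap.ker (sumAB c x y z - sumAB c x' y' z))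

set_option maxRecDepth 100000
set_option maxHeartbeats 2000000
set_option exponentiation.threshold 10000


lemma sum_zmod2 {M : Type*} [AddCommMonoid M] (f : ZMod 2 → M) : ∑ i, f i = f 0 + f 1 := by
  have h : (Finset.univ : Finset (ZMod 2)) = {0, 1} := by decide
  rw [h, Finset.sum_insert (by decide), Finset.sum_singleton]

def fr : Fin 30 → RCIndex := ![((0, 0, 1), (1, 1, 0)), ((0, 0, 1), (1, 1, 1)), ((0, 1, 0), (1, 0, 1)), ((0, 1, 0), (1, 1, 1)), ((0, 1, 1), (1, 0, 0)), ((0, 1, 1), (1, 0, 1)), ((0, 1, 1), (1, 1, 0)), ((0, 1, 1), (1, 1, 1)), ((1, 0, 0), (0, 1, 1)), ((1, 0, 0), (1, 1, 1)), ((1, 0, 1), (0, 0, 0)), ((1, 0, 1), (0, 0, 1)), ((1, 0, 1), (0, 1, 0)), ((1, 0, 1), (0, 1, 1)), ((1, 0, 1), (1, 0, 0)), ((1, 0, 1), (1, 0, 1)), ((1, 0, 1), (1, 1, 0)), ((1, 0, 1), (1, 1, 1)), ((1, 1, 0), (0, 0, 1)), ((1, 1, 0), (0, 1, 1)), ((1,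 1, 0), (1, 0, 1)), ((1, 1, 0), (1, 1, 1)), ((1, 1, 1), (0, 0, 0)), ((1, 1, 1), (0, 0, 1)), ((1, 1, 1), (0, 1, 0)), ((1, 1, 1), (0, 1, 1)), ((1, 1, 1), (1, 0, 0)), ((1, 1, 1), (1, 0, 1)), ((1, 1, 1), (1, 1, 0)), ((1, 1, 1), (1, 1, 1))]

def BIGN : Nat :=
  3518153907951087552955686874470670003758381998435029702309537358404671995037356965855959415866745563872284055392948141054750933227093973414183960061704539352333875663690084156098745150750192815527290861591965158328333500181765854877681812734918796076247868291561140144237371438483716218671135237698529159987908368042266024344050282030709632058749758119522112051399687698741035215710957185793266343173530879469664284250397879547651064433290661668808853866298853228237688878474657404479531125435495695528597529809219207417043668861256073342121701444144144245539608144194017711806175507089867859182947282468028774411133116349482929738270002548392578768391399134650507659011574872617766231139060980869884713852580233751220676719568434645862884408114446811723820125504744391461036250441836156442260083643516342767217619936648730988071719270270473601806049249541430188047577860040483914541547475100651057713785808436839780641280338500368506875765628844471839875335216636384668865506797544118769801450411820685394936297890925175150461255288080225360171446923352147334017508232966500662848399280098730170410029998592600406570784439322590758136754435465405936610810170391695737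88829264717727440027817009273983371730991132014986412251100551567175477470122946985948228551213103411677760859699908231836500410291437658086849766133686518621601046700919888874823105133436055167509148428426625381869894680893506996384452160616869029588712486232957683632485853508817142925876787561120801140294474739646039482092411372776677366219413883737790789051393620563094417225610341477386245831933846383546137307584397284492581087039161453644183818229549768444085632430661450675444890450435671723433056923655245571585672452069483455314789370133824719790165791825


def encN : RCIndex → Nat := fun p =>
  p.1.1.val * 32 + p.1.2.1.val * 16 + p.1.2.2.val * 8 + p.2.1.val * 4 + p.2.2.1.val * 2 +
    p.2.2.2.val

def colQ : Fin 30 → RCIndex → ℤ := fun j i =>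
  (Int.ofNat (BIGN / 2 ^ (3 * (j.val * 64 + encN i)) % 8)) - 2

noncomputable def col : Fin 30 → RCIndex → ℝ := fun j i => ((colQ j i : ℤ) : ℝ)

lemma key1 : ∀ (j : Fin 30) (x y z : ZMod 2),
    (∑ a : ZMod 2, ∑ b : ZMod 2, ∑ c : ZMod 2, colQ j ((a, b, c), (x, y, z))) = 0 := by decide

lemma key2 : ∀ (j : Fin 30) (b c x y z : ZMod 2),
    (∑ a : ZMod 2, colQ j ((a, b, c), (x, y, z))) =
      (∑ a : ZMod 2, colQ j ((a, b, c), (0, y, z))) := by decide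

lemma key3 : ∀ (j : Fin 30) (a b x y z : ZMod 2),
    (∑ c : ZMod 2, colQ j ((a, b, c), (x, y, z))) =
      (∑ c : ZMod 2, colQ j ((a, b, c), (x, y, 0))) := by decide

lemma key4 : ∀ (j : Fin 30) (a x y z : ZMod 2),
    (∑ b : ZMod 2, ∑ c : ZMod 2, colQ j ((a, b, c), (x, y, z))) =
      (∑ b : ZMod 2, ∑ c : ZMod 2, colQ j ((a, b, c), (x, 0, 0))) := by decide

lemma key5 : ∀ (j : Fin 30) (c x y z : ZMod 2),
    (∑ a : ZMod 2, ∑ b : ZMod 2, colQ j ((a, b, c), (x, y, z))) =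
      (∑ a : ZMod 2, ∑ b : ZMod 2, colQ j ((a, b, c), (0, 0, z))) := by decide

lemma key_eval : ∀ j k : Fin 30, colQ j (fr k) = if k = j then 1 else 0 := by decide

lemma col_mem (j : Fin 30) : col j ∈ RCsubspace := by
  simp only [RCsubspace, Submodule.mem_inf, Submodule.mem_iInf, LinearMap.mem_ker]
  refine ⟨⟨⟨⟨?_, ?_⟩, ?_⟩, ?_⟩, ?_⟩
  · intro x y z
    simp only [sumABC, ev, LinearMap.sum_apply, LinearMap.proj_apply, col]
    exact_mod_cast key1 j x y z
  · intro b c x x' y z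
    simp only [sumA, ev, LinearMap.sub_apply, LinearMap.sum_apply, LinearMap.proj_apply, col]
    rw [sub_eq_zero]
    exact_mod_cast (key2 j b c x y z).trans (key2 j b c x' y z).symm
  · intro a b x y z z'
    simp only [sumC, ev, LinearMap.sub_apply, LinearMap.sum_apply, LinearMap.proj_apply, col]
    rw [sub_eq_zero]
    exact_mod_cast (key3 j a b x y z).trans (key3 j a b x y z').symm
  · intro a x y y' z z'
    simp only [sumBC, ev, LinearMap.sub_apply, LinearMap.sum_apply, LinearMap.proj_apply, col]
    rw [sub_eq_zero]
    exact_mod_cast (key4 j a x y z).trans (key4 j a x y' z').symm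
  · intro c x x' y y' z
    simp only [sumAB, ev, LinearMap.sub_apply, LinearMap.sum_apply, LinearMap.proj_apply, col]
    rw [sub_eq_zero]
    exact_mod_cast (key5 j c x y z).trans (key5 j c x' y' z).symm

noncomputable def Rmap : RCsubspace →ₗ[ℝ] (Fin 30 → ℝ) :=
  (LinearMap.funLeft ℝ ℝ fr).comp (Submodule.subtype RCsubspace)

lemma Rmap_inj : Function.Injective Rmap := by
  rw [← LinearMap.ker_eq_bot, Submodule.eq_bot_iff]
  rintro ⟨P, hP⟩ hker
  have hv : ∀ k : Fin 30, P (fr k) = 0 := fun k => congrFun hker k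
  have f0 : P ((0, 0, 1), (1, 1, 0)) = 0 := by
    have h := hv 0; rwa [show fr 0 = ((0, 0, 1), (1, 1, 0)) by decide] at h
  have f1 : P ((0, 0, 1), (1, 1, 1)) = 0 := by
    have h := hv 1; rwa [show fr 1 = ((0, 0, 1), (1, 1, 1)) by decide] at h
  have f2 : P ((0, 1, 0), (1, 0, 1)) = 0 := by
    have h := hv 2; rwa [show fr 2 = ((0, 1, 0), (1, 0, 1)) by decide] at h
  have f3 : P ((0, 1, 0), (1, 1, 1)) = 0 := by
    have h := hv 3; rwa [show fr 3 = ((0, 1, 0), (1, 1, 1)) by decide] at h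
  have f4 : P ((0, 1, 1), (1, 0, 0)) = 0 := by
    have h := hv 4; rwa [show fr 4 = ((0, 1, 1), (1, 0, 0)) by decide] at h
  have f5 : P ((0, 1, 1), (1, 0, 1)) = 0 := by
    have h := hv 5; rwa [show fr 5 = ((0, 1, 1), (1, 0, 1)) by decide] at h
  have f6 : P ((0, 1, 1), (1, 1, 0)) = 0 := by
    have h := hv 6; rwa [show fr 6 = ((0, 1, 1), (1, 1, 0)) by decide] at h
  have f7 : P ((0, 1, 1), (1, 1, 1)) = 0 := by
    have h := hv 7; rwa [show fr 7 = ((0, 1, 1), (1, 1, 1)) by decide] at h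
  have f8 : P ((1, 0, 0), (0, 1, 1)) = 0 := by
    have h := hv 8; rwa [show fr 8 = ((1, 0, 0), (0, 1, 1)) by decide] at h
  have f9 : P ((1, 0, 0), (1, 1, 1)) = 0 := by
    have h := hv 9; rwa [show fr 9 = ((1, 0, 0), (1, 1, 1)) by decide] at h
  have f10 : P ((1, 0, 1), (0, 0, 0)) = 0 := by
    have h := hv 10; rwa [show fr 10 = ((1, 0, 1), (0, 0, 0)) by decide] at h
  have f11 : P ((1, 0, 1), (0, 0, 1)) = 0 := by
    have h := hv 11; rwa [show fr 11 = ((1, 0, 1), (0, 0, 1)) by decide] at h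
  have f12 : P ((1, 0, 1), (0, 1, 0)) = 0 := by
    have h := hv 12; rwa [show fr 12 = ((1, 0, 1), (0, 1, 0)) by decide] at h
  have f13 : P ((1, 0, 1), (0, 1, 1)) = 0 := by
    have h := hv 13; rwa [show fr 13 = ((1, 0, 1), (0, 1, 1)) by decide] at h
  have f14 : P ((1, 0, 1), (1, 0, 0)) = 0 := by
    have h := hv 14; rwa [show fr 14 = ((1, 0, 1), (1, 0, 0)) by decide] at h
  have f15 : P ((1, 0, 1), (1, 0, 1)) = 0 := by
    have h := hv 15; rwa [show fr 15 = ((1, 0, 1), (1, 0, 1)) by decide] at h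
  have f16 : P ((1, 0, 1), (1, 1, 0)) = 0 := by
    have h := hv 16; rwa [show fr 16 = ((1, 0, 1), (1, 1, 0)) by decide] at h
  have f17 : P ((1, 0, 1), (1, 1, 1)) = 0 := by
    have h := hv 17; rwa [show fr 17 = ((1, 0, 1), (1, 1, 1)) by decide] at h
  have f18 : P ((1, 1, 0), (0, 0, 1)) = 0 := by
    have h := hv 18; rwa [show fr 18 = ((1, 1, 0), (0, 0, 1)) by decide] at h
  have f19 : P ((1, 1, 0), (0, 1, 1)) = 0 := by
    have h := hv 19; rwa [show fr 19 = ((1, 1, 0), (0, 1, 1)) by decide] at h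
  have f20 : P ((1, 1, 0), (1, 0, 1)) = 0 := by
    have h := hv 20; rwa [show fr 20 = ((1, 1, 0), (1, 0, 1)) by decide] at h
  have f21 : P ((1, 1, 0), (1, 1, 1)) = 0 := by
    have h := hv 21; rwa [show fr 21 = ((1, 1, 0), (1, 1, 1)) by decide] at h
  have f22 : P ((1, 1, 1), (0, 0, 0)) = 0 := by
    have h := hv 22; rwa [show fr 22 = ((1, 1, 1), (0, 0, 0)) by decide] at h
  have f23 : P ((1, 1, 1), (0, 0, 1)) = 0 := by
    have h := hv 23; rwa [show fr 23 = ((1, 1, 1), (0, 0, 1)) by decide] at h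
  have f24 : P ((1, 1, 1), (0, 1, 0)) = 0 := by
    have h := hv 24; rwa [show fr 24 = ((1, 1, 1), (0, 1, 0)) by decide] at h
  have f25 : P ((1, 1, 1), (0, 1, 1)) = 0 := by
    have h := hv 25; rwa [show fr 25 = ((1, 1, 1), (0, 1, 1)) by decide] at h
  have f26 : P ((1, 1, 1), (1, 0, 0)) = 0 := by
    have h := hv 26; rwa [show fr 26 = ((1, 1, 1), (1, 0, 0)) by decide] at h
  have f27 : P ((1, 1, 1), (1, 0, 1)) = 0 := by
    have h := hv 27; rwa [show fr 27 = ((1, 1, 1), (1, 0, 1)) by decide] at h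
  have f28 : P ((1, 1, 1), (1, 1, 0)) = 0 := by
    have h := hv 28; rwa [show fr 28 = ((1, 1, 1), (1, 1, 0)) by decide] at h
  have f29 : P ((1, 1, 1), (1, 1, 1)) = 0 := by
    have h := hv 29; rwa [show fr 29 = ((1, 1, 1), (1, 1, 1)) by decide] at h
  simp only [RCsubspace, Submodule.mem_inf] at hP
  obtain ⟨⟨⟨⟨h1, h2⟩, h3⟩, h4⟩, h5⟩ := hP
  simp only [Submodule.mem_iInf, LinearMap.mem_ker, sumABC, sumA, sumC, sumBC, sumAB,
    ev, LinearMap.sub_apply, LinearMap.sum_apply, LinearMap.add_apply,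
    LinearMap.proj_apply, sum_zmod2] at h1 h2 h3 h4 h5
  have p0 : P ((0, 0, 0), (0, 0, 0)) = 0 := by
    linear_combination (-1) * (h1 0 0 1) + 1 * (h1 0 1 1) + (-1) * (h1 1 0 0) + 1 * (h1 1 0 1) + 1 * (h1 1 1 0) + (-1) * (h2 0 0 0 1 0 0) + 1 * (h2 0 0 0 1 0 1) + 1 * (h2 0 0 0 1 1 0) + (-1) * (h2 0 1 0 1 0 0) + 1 * (h2 0 1 0 1 0 1) + (-1) * (h2 1 0 0 1 0 0) + 1 * (h2 1 0 0 1 1 0) + 1 * (h3 0 0 0 1 0 1) + (-1) * (h3 0 1 0 0 0 1) + 1 * (h3 0 1 0 1 0 1) + (-1) * (h4 0 0 1 0 0 0) + (-1) * (h5 0 0 0 1 0 0) + (-1) * f0 + (-1) * f2 + 1 * f4 + (-1) * f5 + (-1) * f6 + (-1) * f8 + 1 * f10 + (-1) * f13 + (-1) * f16 + 1 * f18 + (-1) * f19 + (-1) * f20 + 1 * f23 + (-1) * f25 + 1 * f26 + (-1) * f27 + (-1) * f28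
  have p1 : P ((0, 0, 0), (0, 0, 1)) = 0 := by
    linear_combination (-1) * (h1 0 0 1) + 1 * (h1 0 1 1) + 1 * (h1 1 1 1) + 1 * (h2 0 0 0 1 1 1) + (-1) * (h2 1 0 0 1 0 1) + 1 * (h2 1 0 0 1 1 1) + (-1) * (h3 0 0 0 0 0 1) + 1 * (h3 0 0 0 1 0 1) + (-1) * (h3 0 1 0 0 0 1) + 1 * (h3 0 1 0 1 0 1) + (-1) * (h4 0 0 1 0 0 0) + (-1) * (h5 0 0 0 1 0 1) + (-1) * f1 + (-1) * f2 + (-1) * f7 + (-1) * f8 + 1 * f11 + (-1) * f13 + (-1) * f17 + 1 * f18 + (-1) * f19 + (-1) * f20 + 1 * f23 + (-1) * f25 + (-1) * f29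
  have p2 : P ((0, 0, 0), (0, 1, 0)) = 0 := by
    linear_combination 1 * (h1 1 1 1) + 1 * (h2 0 0 0 1 1 1) + (-1) * (h2 0 1 0 1 1 0) + 1 * (h2 0 1 0 1 1 1) + 1 * (h3 0 0 0 1 0 1) + (-1) * f0 + (-1) * f3 + (-1) * f7 + (-1) * f8 + 1 * f12 + (-1) * f13 + (-1) * f16 + (-1) * f21 + (-1) * f29
  have p3 : P ((0, 0, 0), (0, 1, 1)) = 0 := by
    linear_combination 1 * (h1 1 1 1) + 1 * (h2 0 0 0 1 1 1) + (-1) * f1 + (-1) * f3 + (-1) * f7 + (-1) * f8 + (-1) * f17 + (-1) * f21 + (-1) * f29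
  have p4 : P ((0, 0, 0), (1, 0, 0)) = 0 := by
    linear_combination (-1) * (h1 1 0 0) + 1 * (h1 1 1 0) + 1 * (h1 1 1 1) + (-1) * (h2 0 0 0 1 0 0) + 1 * (h2 0 0 0 1 1 0) + (-1) * (h2 1 0 0 1 0 0) + 1 * (h2 1 0 0 1 1 0) + 1 * (h3 0 0 1 1 0 1) + (-1) * (h3 0 1 1 0 0 1) + 1 * (h3 0 1 1 1 0 1) + (-1) * (h4 0 1 1 0 0 0) + (-1) * (h5 0 0 0 1 0 0) + (-1) * f0 + (-1) * f2 + 1 * f4 + (-1) * f5 + (-1) * f6 + (-1) * f9 + 1 * f14 + (-1) * f16 + (-1) * f17 + (-1) * f21 + 1 * f26 + (-1) * f28 + (-1) * f29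
  have p5 : P ((0, 0, 0), (1, 0, 1)) = 0 := by
    linear_combination (-1) * (h1 1 0 1) + 2 * (h1 1 1 1) + (-1) * (h2 0 0 0 1 0 1) + 1 * (h2 0 0 0 1 1 1) + (-1) * (h2 1 0 0 1 0 1) + 1 * (h2 1 0 0 1 1 1) + (-1) * (h3 0 0 1 0 0 1) + 1 * (h3 0 0 1 1 0 1) + (-1) * (h3 0 1 1 0 0 1) + 1 * (h3 0 1 1 1 0 1) + (-1) * (h4 0 1 1 0 0 0) + (-1) * (h5 0 0 0 1 0 1) + (-1) * f1 + (-1) * f2 + (-1) * f7 + (-1) * f9 + 1 * f15 + (-2) * f17 + (-1) * f21 + 1 * f27 + (-2) * f29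
  have p6 : P ((0, 0, 0), (1, 1, 0)) = 0 := by
    linear_combination 1 * (h1 1 1 1) + 1 * (h3 0 0 1 1 0 1) + (-1) * f0 + (-1) * f3 + (-1) * f7 + (-1) * f9 + (-1) * f17 + (-1) * f21 + (-1) * f29
  have p7 : P ((0, 0, 0), (1, 1, 1)) = 0 := by
    linear_combination 1 * (h1 1 1 1) + (-1) * f1 + (-1) * f3 + (-1) * f7 + (-1) * f9 + (-1) * f17 + (-1) * f21 + (-1) * f29
  have p8 : P ((0, 0, 1), (0, 0, 0)) = 0 := by
    linear_combination 1 * (h1 1 0 0) + (-1) * (h1 1 1 0) + 1 * (h2 0 0 0 1 0 0) + (-1) * (h2 0 0 0 1 1 0) + 1 * (h2 0 1 0 1 0 0) + 1 * (h2 1 0 0 1 0 0) + (-1) * (h2 1 0 0 1 1 0) + 1 * (h5 0 0 0 1 0 0) + 1 * f0 + (-1) * f4 + 1 * f6 + (-1) * f10 + 1 * f16 + (-1) * f26 + 1 * f28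
  have p9 : P ((0, 0, 1), (0, 0, 1)) = 0 := by
    linear_combination 1 * (h1 1 0 1) + (-1) * (h1 1 1 1) + 1 * (h2 0 0 0 1 0 1) + (-1) * (h2 0 0 0 1 1 1) + 1 * (h2 0 1 0 1 0 1) + 1 * (h2 1 0 0 1 0 1) + (-1) * (h2 1 0 0 1 1 1) + 1 * (h5 0 0 0 1 0 1) + 1 * f1 + (-1) * f5 + 1 * f7 + (-1) * f11 + 1 * f17 + (-1) * f27 + 1 * f29
  have p10 : P ((0, 0, 1), (0, 1, 0)) = 0 := by
    linear_combination 1 * (h2 0 1 0 1 1 0) + 1 * f0 + (-1) * f12 + 1 * f16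
  have p11 : P ((0, 0, 1), (0, 1, 1)) = 0 := by
    linear_combination 1 * (h2 0 1 0 1 1 1) + 1 * f1 + (-1) * f13 + 1 * f17
  have p12 : P ((0, 0, 1), (1, 0, 0)) = 0 := by
    linear_combination 1 * (h1 1 0 0) + (-1) * (h1 1 1 0) + 1 * (h2 0 0 0 1 0 0) + (-1) * (h2 0 0 0 1 1 0) + 1 * (h2 1 0 0 1 0 0) + (-1) * (h2 1 0 0 1 1 0) + 1 * (h5 0 0 0 1 0 0) + 1 * f0 + (-1) * f4 + 1 * f6 + (-1) * f14 + 1 * f16 + (-1) * f26 + 1 * f28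
  have p13 : P ((0, 0, 1), (1, 0, 1)) = 0 := by
    linear_combination 1 * (h1 1 0 1) + (-1) * (h1 1 1 1) + 1 * (h2 0 0 0 1 0 1) + (-1) * (h2 0 0 0 1 1 1) + 1 * (h2 1 0 0 1 0 1) + (-1) * (h2 1 0 0 1 1 1) + 1 * (h5 0 0 0 1 0 1) + 1 * f1 + (-1) * f5 + 1 * f7 + (-1) * f15 + 1 * f17 + (-1) * f27 + 1 * f29
  have p16 : P ((0, 1, 0), (0, 0, 0)) = 0 := by
    linear_combination (-1) * (h1 0 0 0) + 1 * (h1 0 0 1) + 1 * (h1 1 0 0) + (-1) * (h1 1 0 1) + 1 * (h2 0 0 0 1 0 0) + (-1) * (h2 0 0 0 1 0 1) + 1 * (h2 0 1 0 1 0 0) + (-1) * (h2 0 1 0 1 0 1) + 1 * (h2 1 0 0 1 0 0) + 1 * (h3 0 1 0 0 0 1) + 1 * f2 + (-1) * f4 + 1 * f5 + (-1) * f18 + 1 * f20 + 1 * f22 + (-1) * f23 + (-1) * f26 + 1 * f27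
  have p17 : P ((0, 1, 0), (0, 0, 1)) = 0 := by
    linear_combination 1 * (h2 1 0 0 1 0 1) + 1 * f2 + (-1) * f18 + 1 * f20
  have p18 : P ((0, 1, 0), (0, 1, 0)) = 0 := by
    linear_combination (-1) * (h1 0 1 0) + 1 * (h1 0 1 1) + 1 * (h1 1 1 0) + (-1) * (h1 1 1 1) + 1 * (h2 0 0 0 1 1 0) + (-1) * (h2 0 0 0 1 1 1) + 1 * (h2 0 1 0 1 1 0) + (-1) * (h2 0 1 0 1 1 1) + 1 * (h2 1 0 0 1 1 0) + 1 * (h3 0 1 0 1 0 1) + 1 * f3 + (-1) * f6 + 1 * f7 + (-1) * f19 + 1 * f21 + 1 * f24 + (-1) * f25 + (-1) * f28 + 1 * f29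
  have p19 : P ((0, 1, 0), (0, 1, 1)) = 0 := by
    linear_combination 1 * (h2 1 0 0 1 1 1) + 1 * f3 + (-1) * f19 + 1 * f21
  have p20 : P ((0, 1, 0), (1, 0, 0)) = 0 := by
    linear_combination 1 * (h3 0 1 1 0 0 1) + 1 * f2 + (-1) * f4 + 1 * f5
  have p22 : P ((0, 1, 0), (1, 1, 0)) = 0 := by
    linear_combination 1 * (h3 0 1 1 1 0 1) + 1 * f3 + (-1) * f6 + 1 * f7
  have p24 : P ((0, 1, 1), (0, 0, 0)) = 0 := by
    linear_combination 1 * (h1 0 0 0) + (-1) * (h1 1 0 0) + (-1) * (h2 0 0 0 1 0 0) + (-1) * (h2 0 1 0 1 0 0) + (-1) * (h2 1 0 0 1 0 0) + 1 * f4 + (-1) * f22 + 1 * f26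
  have p25 : P ((0, 1, 1), (0, 0, 1)) = 0 := by
    linear_combination 1 * (h1 0 0 1) + (-1) * (h1 1 0 1) + (-1) * (h2 0 0 0 1 0 1) + (-1) * (h2 0 1 0 1 0 1) + (-1) * (h2 1 0 0 1 0 1) + 1 * f5 + (-1) * f23 + 1 * f27
  have p26 : P ((0, 1, 1), (0, 1, 0)) = 0 := by
    linear_combination 1 * (h1 0 1 0) + (-1) * (h1 1 1 0) + (-1) * (h2 0 0 0 1 1 0) + (-1) * (h2 0 1 0 1 1 0) + (-1) * (h2 1 0 0 1 1 0) + 1 * f6 + (-1) * f24 + 1 * f28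
  have p27 : P ((0, 1, 1), (0, 1, 1)) = 0 := by
    linear_combination 1 * (h1 0 1 1) + (-1) * (h1 1 1 1) + (-1) * (h2 0 0 0 1 1 1) + (-1) * (h2 0 1 0 1 1 1) + (-1) * (h2 1 0 0 1 1 1) + 1 * f7 + (-1) * f25 + 1 * f29
  have p32 : P ((1, 0, 0), (0, 0, 0)) = 0 := by
    linear_combination 1 * (h1 0 0 1) + (-1) * (h1 0 1 1) + 1 * (h3 0 0 0 0 0 1) + (-1) * (h3 0 0 0 1 0 1) + 1 * (h3 0 1 0 0 0 1) + (-1) * (h3 0 1 0 1 0 1) + 1 * (h3 1 0 0 0 0 1) + 1 * (h4 0 0 1 0 0 0) + 1 * f8 + (-1) * f10 + 1 * f13 + (-1) * f18 + 1 * f19 + (-1) * f23 + 1 * f25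
  have p33 : P ((1, 0, 0), (0, 0, 1)) = 0 := by
    linear_combination 1 * (h1 0 0 1) + (-1) * (h1 0 1 1) + 1 * (h3 0 0 0 0 0 1) + (-1) * (h3 0 0 0 1 0 1) + 1 * (h3 0 1 0 0 0 1) + (-1) * (h3 0 1 0 1 0 1) + 1 * (h4 0 0 1 0 0 0) + 1 * f8 + (-1) * f11 + 1 * f13 + (-1) * f18 + 1 * f19 + (-1) * f23 + 1 * f25
  have p34 : P ((1, 0, 0), (0, 1, 0)) = 0 := by
    linear_combination 1 * (h3 1 0 0 1 0 1) + 1 * f8 + (-1) * f12 + 1 * f13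
  have p36 : P ((1, 0, 0), (1, 0, 0)) = 0 := by
    linear_combination 1 * (h1 1 0 1) + (-1) * (h1 1 1 1) + (-1) * (h2 0 0 0 1 0 0) + 1 * (h2 0 0 0 1 0 1) + (-1) * (h2 0 1 0 1 0 0) + 1 * (h2 0 1 0 1 0 1) + 1 * (h3 0 0 0 0 0 1) + (-1) * (h3 0 0 1 1 0 1) + 1 * (h3 0 1 1 0 0 1) + (-1) * (h3 0 1 1 1 0 1) + 1 * (h3 1 0 0 0 0 1) + 1 * (h4 0 1 1 0 0 0) + 1 * f9 + (-1) * f14 + 1 * f17 + (-1) * f20 + 1 * f21 + (-1) * f27 + 1 * f29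
  have p37 : P ((1, 0, 0), (1, 0, 1)) = 0 := by
    linear_combination 1 * (h1 1 0 1) + (-1) * (h1 1 1 1) + 1 * (h3 0 0 1 0 0 1) + (-1) * (h3 0 0 1 1 0 1) + 1 * (h3 0 1 1 0 0 1) + (-1) * (h3 0 1 1 1 0 1) + 1 * (h4 0 1 1 0 0 0) + 1 * f9 + (-1) * f15 + 1 * f17 + (-1) * f20 + 1 * f21 + (-1) * f27 + 1 * f29
  have p38 : P ((1, 0, 0), (1, 1, 0)) = 0 := by
    linear_combination (-1) * (h2 0 0 0 1 1 0) + 1 * (h2 0 0 0 1 1 1) + (-1) * (h2 0 1 0 1 1 0) + 1 * (h2 0 1 0 1 1 1) + 1 * (h3 0 0 0 1 0 1) + (-1) * (h3 0 0 1 1 0 1) + 1 * (h3 1 0 0 1 0 1) + 1 * f9 + (-1) * f16 + 1 * f17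
  have p48 : P ((1, 1, 0), (0, 0, 0)) = 0 := by
    linear_combination 1 * (h1 0 0 0) + (-1) * (h1 0 0 1) + (-1) * (h3 0 0 0 0 0 1) + (-1) * (h3 0 1 0 0 0 1) + (-1) * (h3 1 0 0 0 0 1) + 1 * f18 + (-1) * f22 + 1 * f23
  have p50 : P ((1, 1, 0), (0, 1, 0)) = 0 := by
    linear_combination 1 * (h1 0 1 0) + (-1) * (h1 0 1 1) + (-1) * (h3 0 0 0 1 0 1) + (-1) * (h3 0 1 0 1 0 1) + (-1) * (h3 1 0 0 1 0 1) + 1 * f19 + (-1) * f24 + 1 * f25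
  have p52 : P ((1, 1, 0), (1, 0, 0)) = 0 := by
    linear_combination 1 * (h1 1 0 0) + (-1) * (h1 1 0 1) + 1 * (h2 0 0 0 1 0 0) + (-1) * (h2 0 0 0 1 0 1) + 1 * (h2 0 1 0 1 0 0) + (-1) * (h2 0 1 0 1 0 1) + (-1) * (h3 0 0 0 0 0 1) + (-1) * (h3 0 1 1 0 0 1) + (-1) * (h3 1 0 0 0 0 1) + 1 * f20 + (-1) * f26 + 1 * f27
  have p54 : P ((1, 1, 0), (1, 1, 0)) = 0 := by
    linear_combination 1 * (h1 1 1 0) + (-1) * (h1 1 1 1) + 1 * (h2 0 0 0 1 1 0) + (-1) * (h2 0 0 0 1 1 1) + 1 * (h2 0 1 0 1 1 0) + (-1) * (h2 0 1 0 1 1 1) + (-1) * (h3 0 0 0 1 0 1) + (-1) * (h3 0 1 1 1 0 1) + (-1) * (h3 1 0 0 1 0 1) + 1 * f21 + (-1) * f28 + 1 * f29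
  refine Subtype.ext (funext fun i => ?_)
  show P i = 0
  have two : ∀ v : ZMod 2, v = 0 ∨ v = 1 := by decide
  obtain ⟨⟨a, b, c⟩, x, y, z⟩ := i
  rcases two a with rfl | rfl <;> rcases two b with rfl | rfl <;>
    rcases two c with rfl | rfl <;> rcases two x with rfl | rfl <;>
    rcases two y with rfl | rfl <;> rcases two z with rfl | rfl <;> assumption


lemma Rmap_surj : Function.Surjective Rmap := by
  rw [← LinearMap.range_eq_top, ← top_le_iff, ← (Pi.basisFun ℝ (Fin 30)).span_eq,
    Submodule.span_le]
  rintro _ ⟨j, rfl⟩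
  refine ⟨⟨col j, col_mem j⟩, funext fun k => ?_⟩
  have h := key_eval j k
  simp only [Rmap, LinearMap.comp_apply, Submodule.subtype_apply, LinearMap.funLeft_apply,
    Function.comp_apply, Pi.basisFun_apply, Pi.single_apply, col]
  split_ifs at h ⊢ <;> exact_mod_cast h

/-- The affine solution space of the RC constraints in the `(3,2,2)` scenario has
dimension 30. -/
theorem rc_subspace_dim : Module.finrank ℝ ↥RCsubspace = 30 := by
  have e := LinearEquiv.ofBijective Rmap ⟨Rmap_inj, Rmap_surj⟩
  rw [e.finrank_eq]
  simp [Module.finrank_pi]
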